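/- arXiv:2309.10354 — 4 statements merged into one kernel-verified Lean document; each statement's English description precedes it below -/
import Mathlib

section
/- Let p : A → G be a Fell bundle over an étale groupoid and U an open bisection. For f ∈ C_c(U; A|_U), one has ‖f * f*‖_∞ = ‖f* * f‖_∞ = ‖f‖_∞², where ‖·‖_∞ is the supremum of fiberwise norms. -/
open Filter Topology

/-- Let `p : A → G` be a Fell bundle over an étale groupoid and `U` an open bisection.
For `f ∈ C_c(U; A|_U)`, one has `‖f * f*‖_∞ = ‖f* * f‖_∞ = ‖f‖_∞²`, where
`‖h‖_∞ = ⨆ γ, ‖h γ‖` is the supremum of the fibrewise norms. -/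
theorem stmt_9 {G : Type*} [TopologicalSpace G] [T2Space G] [LocallyCompactSpace G]
    (r s : G → G) (mul : G → G → G) (inv : G → G)
    (hr : Continuous r) (hs : Continuous s) (hinv : Continuous inv)
    (hr_etale : IsLocalHomeomorph r)
    (e5 : ∀ γ, inv (inv γ) = γ)
    (h_r_mul : ∀ γ η, s γ = r η → r (mul γ η) = r γ)
    (h_s_mul : ∀ γ η, s γ = r η → s (mul γ η) = s η)
    (h_inv_r : ∀ γ, r (inv γ) = s γ) (h_inv_s : ∀ γ, s (inv γ) = r γ)
    (h_mul_inv : ∀ γ, mul γ (inv γ) = r γ) (h_inv_mul : ∀ γ, mul (inv γ) γ = s γ)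
    (A : G → Type*) [∀ γ, NormedAddCommGroup (A γ)] [∀ γ, NormedSpace ℂ (A γ)]
    [TopologicalSpace (Σ γ : G, A γ)]
    (m : ∀ γ η, A γ → A η → A (mul γ η)) (st : ∀ γ, A γ → A (inv γ))
    (hm_norm : ∀ γ η (a : A γ) (b : A η), ‖m γ η a b‖ ≤ ‖a‖ * ‖b‖)
    (hst_norm : ∀ γ (a : A γ), ‖st γ a‖ = ‖a‖)
    -- the fibrewise C*-identity
    (hCstar₁ : ∀ γ (a : A γ), ‖m (inv γ) γ (st γ a) a‖ = ‖a‖ ^ 2)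
    (hCstar₂ : ∀ γ (a : A γ), ‖m γ (inv γ) a (st γ a)‖ = ‖a‖ ^ 2)
    (U : Set G) (hU : IsOpen U) (hU_r : Set.InjOn r U) (hU_s : Set.InjOn s U)
    (f : ∀ γ : G, A γ)
    (hf_cont : Continuous fun γ => (⟨γ, f γ⟩ : Σ γ : G, A γ))
    (hf_supp : IsCompact (closure {γ | f γ ≠ 0}) ∧ closure {γ | f γ ≠ 0} ⊆ U) :
    ∀ conv : (∀ γ : G, A γ) → (∀ γ : G, A γ) → (∀ γ : G, A γ),
      (conv = fun f g γ =>
        ∑' p : {p : G × G // s p.1 = r p.2 ∧ mul p.1 p.2 = γ},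
          p.2.2 ▸ m p.1.1 p.1.2 (f p.1.1) (g p.1.2)) →
    ∀ fstar : ∀ γ : G, A γ, (fstar = fun γ => (e5 γ) ▸ st (inv γ) (f (inv γ))) →
    (⨆ γ : G, ‖conv f fstar γ‖) = (⨆ γ : G, ‖f γ‖) ^ 2 ∧
    (⨆ γ : G, ‖conv fstar f γ‖) = (⨆ γ : G, ‖f γ‖) ^ 2 := by
  rintro conv rfl fstar rfl
  classical
  -- basic cast lemmas
  have hnorm_cast : ∀ {γ γ' : G} (h : γ = γ') (x : A γ), ‖h ▸ x‖ = ‖x‖ := by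
    rintro γ _ rfl x; rfl
  have hcast_ne : ∀ {γ γ' : G} (h : γ = γ') (x : A γ), h ▸ x ≠ 0 → x ≠ 0 := by
    rintro γ _ rfl x h; exact h
  have hUmem : ∀ {β : G}, f β ≠ 0 → β ∈ U := fun {β} hβ =>
    hf_supp.2 (subset_closure hβ)
  have hfstar_norm : ∀ β : G, ‖(e5 β ▸ st (inv β) (f (inv β)) : A β)‖ = ‖f (inv β)‖ := by
    intro β; rw [hnorm_cast, hst_norm]
  have hfstar_eq : ∀ α : G,
      (e5 (inv α) ▸ st (inv (inv α)) (f (inv (inv α))) : A (inv α)) = st α (f α) := by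
    intro α
    have hgen : ∀ δ : G, δ = α → HEq (st δ (f δ)) (st α (f α)) := by rintro δ rfl; rfl
    have hc : ∀ {γ γ' : G} (h : γ = γ') (x : A γ), HEq (h ▸ x) x := by
      rintro γ _ rfl x; rfl
    exact eq_of_heq ((hc _ _).trans (hgen _ (e5 α)))
  have hfactor : ∀ (β₁ β₂ : G) (x : A β₁) (y : A β₂), m β₁ β₂ x y ≠ 0 → x ≠ 0 ∧ y ≠ 0 := by
    intro β₁ β₂ x y hne
    constructor
    · rintro rfl
      apply hne
      apply norm_le_zero_iff.mp
      simpa using hm_norm β₁ β₂ 0 y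
    · rintro rfl
      apply hne
      apply norm_le_zero_iff.mp
      simpa using hm_norm β₁ β₂ x 0
  have hval₁ : ∀ α : G,
      ‖m α (inv α) (f α) (e5 (inv α) ▸ st (inv (inv α)) (f (inv (inv α))))‖ = ‖f α‖ ^ 2 := by
    intro α; rw [hfstar_eq α]; exact hCstar₂ α (f α)
  have hval₂ : ∀ α : G,
      ‖m (inv α) α (e5 (inv α) ▸ st (inv (inv α)) (f (inv (inv α)))) (f α)‖ = ‖f α‖ ^ 2 := by
    intro α; rw [hfstar_eq α]; exact hCstar₁ α (f α)
  have hpair₁ : ∀ (γ β₁ β₂ : G), s β₁ = r β₂ → mul β₁ β₂ = γ →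
      m β₁ β₂ (f β₁) (e5 β₂ ▸ st (inv β₂) (f (inv β₂))) ≠ 0 →
      f β₁ ≠ 0 ∧ β₂ = inv β₁ ∧ γ = r β₁ := by
    intro γ β₁ β₂ h1 h2 hne
    obtain ⟨hx, hy⟩ := hfactor _ _ _ _ hne
    have hfy : f (inv β₂) ≠ 0 := by
      intro h0
      apply hy
      apply norm_eq_zero.mp
      rw [hfstar_norm, h0, norm_zero]
    have hβ : β₁ = inv β₂ := hU_s (hUmem hx) (hUmem hfy) (by rw [h1, h_inv_s])
    have hβ₂ : β₂ = inv β₁ := by rw [hβ, e5]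
    exact ⟨hx, hβ₂, by rw [← h2, hβ₂, h_mul_inv]⟩
  have hpair₂ : ∀ (γ β₁ β₂ : G), s β₁ = r β₂ → mul β₁ β₂ = γ →
      m β₁ β₂ (e5 β₁ ▸ st (inv β₁) (f (inv β₁))) (f β₂) ≠ 0 →
      f β₂ ≠ 0 ∧ β₁ = inv β₂ ∧ γ = s β₂ := by
    intro γ β₁ β₂ h1 h2 hne
    obtain ⟨hx, hy⟩ := hfactor _ _ _ _ hne
    have hfx : f (inv β₁) ≠ 0 := by
      intro h0
      apply hx
      apply norm_eq_zero.mp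
      rw [hfstar_norm, h0, norm_zero]
    have hβ : inv β₁ = β₂ := hU_r (hUmem hfx) (hUmem hy) (by rw [h_inv_r, h1])
    have hβ₁ : β₁ = inv β₂ := by rw [← hβ, e5]
    exact ⟨hy, hβ₁, by rw [← h2, hβ₁, h_inv_mul]⟩
  -- value of f * f⋆ at r α
  have hB₁ : ∀ α : G, f α ≠ 0 →
      ‖∑' p : {p : G × G // s p.1 = r p.2 ∧ mul p.1 p.2 = r α},
        p.2.2 ▸ m p.1.1 p.1.2 (f p.1.1) (e5 p.1.2 ▸ st (inv p.1.2) (f (inv p.1.2)))‖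
        = ‖f α‖ ^ 2 := by
    intro α hα
    have ha : s α = r (inv α) := (h_inv_r α).symm
    rw [tsum_eq_single (⟨(α, inv α), ha, h_mul_inv α⟩ :
        {p : G × G // s p.1 = r p.2 ∧ mul p.1 p.2 = r α})]
    · rw [hnorm_cast]; exact hval₁ α
    · rintro ⟨⟨β₁, β₂⟩, h1, h2⟩ hne
      by_contra hne0
      obtain ⟨hb1, hb2, hb3⟩ := hpair₁ (r α) β₁ β₂ h1 h2 (hcast_ne _ _ hne0)
      have hβ₁α : β₁ = α := hU_r (hUmem hb1) (hUmem hα) hb3.symm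
      exact hne (Subtype.ext (show (β₁, β₂) = (α, inv α) by rw [hb2, hβ₁α]))
  -- value of f⋆ * f at s α
  have hB₂ : ∀ α : G, f α ≠ 0 →
      ‖∑' p : {p : G × G // s p.1 = r p.2 ∧ mul p.1 p.2 = s α},
        p.2.2 ▸ m p.1.1 p.1.2 (e5 p.1.1 ▸ st (inv p.1.1) (f (inv p.1.1))) (f p.1.2)‖
        = ‖f α‖ ^ 2 := by
    intro α hα
    have ha : s (inv α) = r α := h_inv_s α
    rw [tsum_eq_single (⟨(inv α, α), ha, h_inv_mul α⟩ :
        {p : G × G // s p.1 = r p.2 ∧ mul p.1 p.2 = s α})]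
    · rw [hnorm_cast]; exact hval₂ α
    · rintro ⟨⟨β₁, β₂⟩, h1, h2⟩ hne
      by_contra hne0
      obtain ⟨hb1, hb2, hb3⟩ := hpair₂ (s α) β₁ β₂ h1 h2 (hcast_ne _ _ hne0)
      have hβ₂α : β₂ = α := hU_s (hUmem hb1) (hUmem hα) hb3.symm
      exact hne (Subtype.ext (show (β₁, β₂) = (inv α, α) by rw [hb2, hβ₂α]))
  -- dichotomy for f * f⋆
  have hA₁ : ∀ γ : G,
      ‖∑' p : {p : G × G // s p.1 = r p.2 ∧ mul p.1 p.2 = γ},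
        p.2.2 ▸ m p.1.1 p.1.2 (f p.1.1) (e5 p.1.2 ▸ st (inv p.1.2) (f (inv p.1.2)))‖ = 0 ∨
      ∃ α, f α ≠ 0 ∧
      ‖∑' p : {p : G × G // s p.1 = r p.2 ∧ mul p.1 p.2 = γ},
        p.2.2 ▸ m p.1.1 p.1.2 (f p.1.1) (e5 p.1.2 ▸ st (inv p.1.2) (f (inv p.1.2)))‖
        = ‖f α‖ ^ 2 := by
    intro γ
    by_cases hex : ∃ α, f α ≠ 0 ∧ γ = r α
    · obtain ⟨α, hα, rfl⟩ := hex
      exact Or.inr ⟨α, hα, hB₁ α hα⟩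
    · left
      have hz : ∀ p : {p : G × G // s p.1 = r p.2 ∧ mul p.1 p.2 = γ},
          (p.2.2 ▸ m p.1.1 p.1.2 (f p.1.1) (e5 p.1.2 ▸ st (inv p.1.2) (f (inv p.1.2)))
            : A γ) = 0 := by
        rintro ⟨⟨β₁, β₂⟩, h1, h2⟩
        by_contra hne0
        obtain ⟨hb1, hb2, hb3⟩ := hpair₁ γ β₁ β₂ h1 h2 (hcast_ne _ _ hne0)
        exact hex ⟨β₁, hb1, hb3⟩
      rw [norm_eq_zero]
      exact (tsum_congr hz).trans tsum_zero
  -- dichotomy for f⋆ * f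
  have hA₂ : ∀ γ : G,
      ‖∑' p : {p : G × G // s p.1 = r p.2 ∧ mul p.1 p.2 = γ},
        p.2.2 ▸ m p.1.1 p.1.2 (e5 p.1.1 ▸ st (inv p.1.1) (f (inv p.1.1))) (f p.1.2)‖ = 0 ∨
      ∃ α, f α ≠ 0 ∧
      ‖∑' p : {p : G × G // s p.1 = r p.2 ∧ mul p.1 p.2 = γ},
        p.2.2 ▸ m p.1.1 p.1.2 (e5 p.1.1 ▸ st (inv p.1.1) (f (inv p.1.1))) (f p.1.2)‖
        = ‖f α‖ ^ 2 := by
    intro γ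
    by_cases hex : ∃ α, f α ≠ 0 ∧ γ = s α
    · obtain ⟨α, hα, rfl⟩ := hex
      exact Or.inr ⟨α, hα, hB₂ α hα⟩
    · left
      have hz : ∀ p : {p : G × G // s p.1 = r p.2 ∧ mul p.1 p.2 = γ},
          (p.2.2 ▸ m p.1.1 p.1.2 (e5 p.1.1 ▸ st (inv p.1.1) (f (inv p.1.1))) (f p.1.2)
            : A γ) = 0 := by
        rintro ⟨⟨β₁, β₂⟩, h1, h2⟩
        by_contra hne0
        obtain ⟨hb1, hb2, hb3⟩ := hpair₂ γ β₁ β₂ h1 h2 (hcast_ne _ _ hne0)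
        exact hex ⟨β₂, hb1, hb3⟩
      rw [norm_eq_zero]
      exact (tsum_congr hz).trans tsum_zero
  -- the supremum computation
  have main : ∀ v : G → ℝ, (∀ γ, 0 ≤ v γ) →
      (∀ γ, v γ = 0 ∨ ∃ α, f α ≠ 0 ∧ v γ = ‖f α‖ ^ 2) →
      (∀ α : G, f α ≠ 0 → ∃ γ, v γ = ‖f α‖ ^ 2) →
      (⨆ γ, v γ) = (⨆ γ, ‖f γ‖) ^ 2 := by
    intro v hv0 hA hB
    rcases isEmpty_or_nonempty G with hG | hG
    · rw [Real.iSup_of_isEmpty, Real.iSup_of_isEmpty]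
      norm_num
    by_cases hbdd : BddAbove (Set.range fun γ : G => ‖f γ‖)
    · obtain ⟨M, hM⟩ := hbdd
      have hM' : ∀ γ : G, ‖f γ‖ ≤ M := fun γ => hM (Set.mem_range_self γ)
      have hfleS : ∀ γ : G, ‖f γ‖ ≤ ⨆ γ : G, ‖f γ‖ := fun γ =>
        le_ciSup ⟨M, fun x hx => by obtain ⟨γ', rfl⟩ := hx; exact hM' γ'⟩ γ
      have hS0 : 0 ≤ ⨆ γ : G, ‖f γ‖ := Real.iSup_nonneg fun _ => norm_nonneg _
      have hbdd2 : BddAbove (Set.range v) := by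
        refine ⟨M ^ 2, ?_⟩
        rintro x ⟨γ, rfl⟩
        rcases hA γ with h | ⟨α, hα, h⟩
        · rw [h]; positivity
        · rw [h]; exact pow_le_pow_left₀ (norm_nonneg _) (hM' α) 2
      apply le_antisymm
      · apply ciSup_le
        intro γ
        rcases hA γ with h | ⟨α, hα, h⟩
        · rw [h]; positivity
        · rw [h]; exact pow_le_pow_left₀ (norm_nonneg _) (hfleS α) 2
      · have hV0 : 0 ≤ ⨆ γ, v γ := Real.iSup_nonneg hv0
        have h1 : (⨆ γ : G, ‖f γ‖) ≤ Real.sqrt (⨆ γ, v γ) := by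
          apply ciSup_le
          intro α
          by_cases hα : f α = 0
          · rw [hα, norm_zero]; exact Real.sqrt_nonneg _
          · obtain ⟨γ, hγ⟩ := hB α hα
            have hrw : ‖f α‖ = Real.sqrt (v γ) := by
              rw [hγ, Real.sqrt_sq (norm_nonneg _)]
            rw [hrw]
            exact Real.sqrt_le_sqrt (le_ciSup hbdd2 γ)
        calc (⨆ γ : G, ‖f γ‖) ^ 2 ≤ Real.sqrt (⨆ γ, v γ) ^ 2 :=
              pow_le_pow_left₀ hS0 h1 2
          _ = ⨆ γ, v γ := Real.sq_sqrt hV0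
    · have h2 : ¬ BddAbove (Set.range fun γ : G => ‖f γ‖ ^ 2) := by
        rintro ⟨M, hM⟩
        apply hbdd
        refine ⟨max M 1, ?_⟩
        rintro x ⟨γ, rfl⟩
        by_cases h1 : ‖f γ‖ ≤ 1
        · exact le_max_of_le_right h1
        · push_neg at h1
          refine le_max_of_le_left ?_
          calc ‖f γ‖ ≤ ‖f γ‖ ^ 2 := le_self_pow₀ h1.le two_ne_zero
            _ ≤ M := hM (Set.mem_range_self γ)
      have h3 : ¬ BddAbove (Set.range v) := by
        rintro ⟨M, hM⟩
        apply h2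
        refine ⟨max M 0, ?_⟩
        rintro x ⟨α, rfl⟩
        show ‖f α‖ ^ 2 ≤ max M 0
        by_cases hα : f α = 0
        · rw [hα]; simp
        · obtain ⟨γ, hγ⟩ := hB α hα
          rw [← hγ]
          exact le_max_of_le_left (hM (Set.mem_range_self γ))
      rw [Real.iSup_of_not_bddAbove h3, Real.iSup_of_not_bddAbove hbdd]
      norm_num
  constructor
  · exact main _ (fun γ => norm_nonneg _) hA₁
      (fun α hα => ⟨r α, hB₁ α hα⟩)
  · exact main _ (fun γ => norm_nonneg _) hA₂
      (fun α hα => ⟨s α, hB₂ α hα⟩)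
end

section
/- Let p : A → X be an upper semicontinuous bundle of C*-algebras over a locally compact Hausdorff space X, and let (u_n) be an approximate identity of the section C*-algebra C_0(X; A). Then for each x ∈ X, the sequence (u_n(x)) is an approximate identity of the fiber C*-algebra A_x. -/
/-! Evaluation at `x` is a *-homomorphism of C⋆-algebras, hence contractive, order-preserving
and continuous; being surjective, it carries the approximate-unit property of `u` to the fibre. -/

open Filter Topology
open scoped CStarAlgebra

lemma NonUnitalStarAlgHom.tendsto_mul_map_of_surjective {R S ι : Type*}
    [NonUnitalCStarAlgebra R] [NonUnitalCStarAlgebra S] (φ : R →⋆ₙₐ[ℂ] S)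
    (hφ : Function.Surjective φ) {l : Filter ι} {u : ι → R}
    (hu : ∀ b, Tendsto (fun i => b * u i) l (𝓝 b) ∧ Tendsto (fun i => u i * b) l (𝓝 b))
    (a : S) :
    Tendsto (fun i => a * φ (u i)) l (𝓝 a) ∧ Tendsto (fun i => φ (u i) * a) l (𝓝 a) := by
  obtain ⟨b, rfl⟩ := hφ a
  have hφb := (map_continuous φ).tendsto b
  exact ⟨by simpa only [Function.comp_def, map_mul] using hφb.comp (hu b).1,
    by simpa only [Function.comp_def, map_mul] using hφb.comp (hu b).2⟩

theorem stmt_10_general {X : Type*}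
    (A : X → Type*) [∀ x, NonUnitalCStarAlgebra (A x)]
    [∀ x, PartialOrder (A x)] [∀ x, StarOrderedRing (A x)]
    {B : Type*} [NonUnitalCStarAlgebra B] [PartialOrder B] [StarOrderedRing B]
    (ev : ∀ x, B →⋆ₙₐ[ℂ] A x)
    (h_sections : ∀ x, Function.Surjective (ev x))
    (u : ℕ → B)
    (hpos : ∀ n, 0 ≤ u n) (hball : ∀ n, ‖u n‖ ≤ 1) (hmono : Monotone u)
    (happrox : ∀ b : B, Tendsto (fun n => b * u n) atTop (nhds b) ∧
      Tendsto (fun n => u n * b) atTop (nhds b)) :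
    ∀ x : X,
      (∀ n, 0 ≤ ev x (u n)) ∧ (∀ n, ‖ev x (u n)‖ ≤ 1) ∧
      Monotone (fun n => ev x (u n)) ∧
      (∀ a : A x, Tendsto (fun n => a * ev x (u n)) atTop (nhds a) ∧
        Tendsto (fun n => ev x (u n) * a) atTop (nhds a)) := fun x =>
  ⟨fun n => map_nonneg (ev x) (hpos n),
    fun n => (NonUnitalStarAlgHom.norm_apply_le (ev x) (u n)).trans (hball n),
    (OrderHomClass.mono (ev x)).comp hmono,
    (ev x).tendsto_mul_map_of_surjective (h_sections x) happrox⟩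

/-- Let `p : A → X` be an upper semicontinuous C*-bundle over a locally compact Hausdorff
space `X`, presented by its section algebra `B = C₀(X; A)` together with the surjective
evaluation *-homomorphisms `ev x : B → A x` ("enough sections") and the norm
`‖b‖ = ⨆ x, ‖ev x b‖`.  If `(u n)` is an approximate identity of `B`, then for every
`x ∈ X`, `(ev x (u n))` is an approximate identity of the fibre C*-algebra `A x`. -/
theorem stmt_10 {X : Type*} [TopologicalSpace X] [T2Space X] [LocallyCompactSpace X]
    (A : X → Type*) [∀ x, NonUnitalCStarAlgebra (A x)]
    [∀ x, PartialOrder (A x)] [∀ x, StarOrderedRing (A x)]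
    {B : Type*} [NonUnitalCStarAlgebra B] [PartialOrder B] [StarOrderedRing B]
    (ev : ∀ x, B →⋆ₙₐ[ℂ] A x)
    (h_sections : ∀ x, Function.Surjective (ev x))
    (h_norm : ∀ b : B, ‖b‖ = ⨆ x, ‖ev x b‖)
    (u : ℕ → B)
    (hpos : ∀ n, 0 ≤ u n) (hball : ∀ n, ‖u n‖ ≤ 1) (hmono : Monotone u)
    (happrox : ∀ b : B, Tendsto (fun n => b * u n) atTop (nhds b) ∧
      Tendsto (fun n => u n * b) atTop (nhds b)) :
    ∀ x : X,
      (∀ n, 0 ≤ ev x (u n)) ∧ (∀ n, ‖ev x (u n)‖ ≤ 1) ∧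
      Monotone (fun n => ev x (u n)) ∧
      (∀ a : A x, Tendsto (fun n => a * ev x (u n)) atTop (nhds a) ∧
        Tendsto (fun n => ev x (u n) * a) atTop (nhds a)) :=
  stmt_10_general A ev h_sections u hpos hball hmono happrox
end

section
/- Let X be a compact Hausdorff space, N = {1,…,n}, G = N × X × N the groupoid of the trivial equivalence relation on N fibered over X, c : G → ℝ a continuous 1-cocycle, and β ∈ ℝ. Given a finite measure μ₁ on X, define measures μ_k on X_k = {k} × X by dμ_k(x) = e^{−β c(k,x,1)} dμ₁(x), set μ = ∑_{k=1}^n μ_k, and ν = μ / μ(G⁽⁰⁾). Then ν is a quasi-invariant probability measure on G⁽⁰⁾ = N × X with Radon–Nikodym derivative e^{−βc}; that is, ∫ ∑_{(i,x,j)∈G^{(h,x)}} f(i,x,j) dν(h,x) = ∫ ∑_{(i,x,j)∈G_{(h,x)}} f(i,x,j) e^{−β c(i,x,j)} dν(h,x) for all f ∈ C(G). -/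
open Filter Topology MeasureTheory

/-!
Write `w k x = e^{-β c(k,x,0)}`, so that `μ` is the measure on `N × X` whose slice over `k` is
`w k · μ₁`. Integrating against `μ` is integrating `∑ₖ w k x • g (k, x)` against `μ₁`, so both
sides of the identity become `μ₁`-integrals of finite double sums over `N × N`. The cocycle
identity `c(k,x,0) = c(k,x,j) + c(j,x,0)` gives `w k x = e^{-β c(k,x,j)} w j x`, which turns the
range sum into the source sum term by term. Compactness of `X` makes all weights bounded, hence
`μ` finite, and their positivity makes it nonzero, so it can be normalised.
-/

section FiberwiseWithDensity

variable {ι X E : Type*} [MeasurableSpace ι] [MeasurableSpace X]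
  [NormedAddCommGroup E] [NormedSpace ℝ E]

theorem integrable_withDensity_ofReal_iff {m : Measure X} {d : X → ℝ} (hd : Measurable d)
    (hd0 : ∀ x, 0 ≤ d x) {g : X → E} :
    Integrable g (m.withDensity fun x => ENNReal.ofReal (d x)) ↔
      Integrable (fun x => d x • g x) m := by
  simp only [integrable_withDensity_iff_integrable_smul' hd.ennreal_ofReal
    (ae_of_all _ fun _ => ENNReal.ofReal_lt_top), ENNReal.toReal_ofReal (hd0 _)]

theorem integral_withDensity_ofReal {m : Measure X} {d : X → ℝ} (hd : Measurable d)
    (hd0 : ∀ x, 0 ≤ d x) (g : X → E) :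
    ∫ x, g x ∂(m.withDensity fun x => ENNReal.ofReal (d x)) = ∫ x, d x • g x ∂m := by
  simp only [integral_withDensity_eq_integral_toReal_smul hd.ennreal_ofReal
    (ae_of_all _ fun _ => ENNReal.ofReal_lt_top), ENNReal.toReal_ofReal (hd0 _)]

noncomputable def fiberwiseWithDensity (m : Measure X) (w : ι → X → ℝ) : Measure (ι × X) :=
  Measure.sum fun k => (m.withDensity fun x => ENNReal.ofReal (w k x)).map (k, ·)

theorem fiberwiseWithDensity_ne_zero [Nonempty ι] {m : Measure X} (hm : m ≠ 0)
    {w : ι → X → ℝ} (hw : ∀ k, Measurable (w k)) (hw_pos : ∀ k x, 0 < w k x) :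
    fiberwiseWithDensity m w ≠ 0 := by
  obtain ⟨k⟩ := ‹Nonempty ι›
  intro h
  have hslice : (m.withDensity fun x => ENNReal.ofReal (w k x)).map (k, ·) = 0 := by
    rw [← Measure.nonpos_iff_eq_zero', ← h]
    exact Measure.le_sum _ k
  rw [Measure.map_eq_zero_iff measurable_prodMk_left.aemeasurable,
    withDensity_eq_zero_iff (hw k).ennreal_ofReal.aemeasurable] at hslice
  have : ∀ᵐ _ ∂m, False :=
    hslice.mono fun x hx => (ENNReal.ofReal_pos.2 (hw_pos k x)).ne' hx
  exact hm (ae_eq_bot.1 (eventually_false_iff_eq_bot.1 this))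

variable [Fintype ι]

theorem integral_sum_map_prodMk [MeasurableSingletonClass ι] (m : ι → Measure X)
    {g : ι × X → E} (hg : ∀ k, Integrable (fun x => g (k, x)) (m k)) :
    ∫ u, g u ∂(Measure.sum fun k => (m k).map (k, ·)) = ∑ k, ∫ x, g (k, x) ∂(m k) := by
  rw [Measure.sum_fintype, integral_finsetSum_measure fun k _ =>
    (measurableEmbedding_prodMk_left k).integrable_map_iff.2 (hg k)]
  exact Finset.sum_congr rfl fun k _ => (measurableEmbedding_prodMk_left k).integral_map _

variable [TopologicalSpace X] [CompactSpace X] [OpensMeasurableSpace X]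
  (m : Measure X) [IsFiniteMeasure m] {w : ι → X → ℝ}

theorem isFiniteMeasure_fiberwiseWithDensity (hw : ∀ k, Continuous (w k)) :
    IsFiniteMeasure (fiberwiseWithDensity m w) := by
  have (k : ι) : IsFiniteMeasure (m.withDensity fun x => ENNReal.ofReal (w k x)) :=
    isFiniteMeasure_withDensity_ofReal
      ((hw k).integrable_of_hasCompactSupport (.of_compactSpace _)).hasFiniteIntegral
  rw [fiberwiseWithDensity, Measure.sum_fintype]
  infer_instance

theorem integral_fiberwiseWithDensity [MeasurableSingletonClass ι] (hw : ∀ k, Continuous (w k))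
    (hw0 : ∀ k x, 0 ≤ w k x) {g : ι × X → E} (hg : ∀ k, Continuous fun x => g (k, x)) :
    ∫ u, g u ∂(fiberwiseWithDensity m w) = ∫ x, ∑ k, w k x • g (k, x) ∂m := by
  have hint (k : ι) : Integrable (fun x => w k x • g (k, x)) m :=
    ((hw k).smul (hg k)).integrable_of_hasCompactSupport (.of_compactSpace _)
  rw [fiberwiseWithDensity, integral_sum_map_prodMk _ fun k =>
      (integrable_withDensity_ofReal_iff (hw k).measurable (hw0 k)).2 (hint k),
    integral_finsetSum _ fun k _ => hint k]
  exact Finset.sum_congr rfl fun k _ => integral_withDensity_ofReal (hw k).measurable (hw0 k) _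

end FiberwiseWithDensity

theorem sum_exp_smul_sum_eq_of_cocycle {ι : Type*} [Fintype ι] {c : ι → ι → ℝ}
    (hc : ∀ h m k, c h m + c m k = c h k) (β : ℝ) (o : ι) (F : ι → ι → ℂ) :
    ∑ k, Real.exp (-β * c k o) • ∑ j, F k j
      = ∑ j, Real.exp (-β * c j o) • ∑ i, F i j * (Real.exp (-β * c i j) : ℂ) := by
  have hexp (i j : ι) :
      Real.exp (-β * c i o) = Real.exp (-β * c j o) * Real.exp (-β * c i j) := by
    rw [← Real.exp_add, ← hc i j o]
    ring_nf
  simp only [Finset.smul_sum]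
  rw [Finset.sum_comm]
  refine Finset.sum_congr rfl fun j _ => Finset.sum_congr rfl fun i _ => ?_
  rw [hexp i j, Complex.real_smul, Complex.real_smul]
  push_cast
  ring

theorem stmt_15_general {X : Type*} [TopologicalSpace X] [CompactSpace X]
    [MeasurableSpace X] [BorelSpace X] {n : ℕ} [NeZero n]
    (c : Fin n × X × Fin n → ℝ) (hc : Continuous c)
    (hcocycle : ∀ (h m k : Fin n) (x : X), c (h, x, m) + c (m, x, k) = c (h, x, k))
    (β : ℝ)
    (μ₁ : Measure X) [IsFiniteMeasure μ₁] (hμ₁ : μ₁ ≠ 0) :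
    ∀ μk : Fin n → Measure X,
      (μk = fun k => μ₁.withDensity fun x => ENNReal.ofReal (Real.exp (-β * c (k, x, 0)))) →
    ∀ μ : Measure (Fin n × X),
      (μ = Measure.sum fun k => (μk k).map fun x => (k, x)) →
    ∀ ν : Measure (Fin n × X), (ν = (μ Set.univ)⁻¹ • μ) →
    IsProbabilityMeasure ν ∧
    ∀ f : Fin n × X × Fin n → ℂ, Continuous f →
      ∫ u, (∑ j : Fin n, f (u.1, u.2, j)) ∂ν
        = ∫ u, (∑ i : Fin n, f (i, u.2, u.1) * (Real.exp (-β * c (i, u.2, u.1)) : ℝ)) ∂ν := by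
  intro μk hμk μ hμ ν hν
  set w : Fin n → X → ℝ := fun k x => Real.exp (-β * c (k, x, 0))
  obtain rfl : μ = fiberwiseWithDensity μ₁ w := by rw [hμ, hμk]; rfl
  have hw (k : Fin n) : Continuous (w k) := by fun_prop
  have hw_pos (k : Fin n) (x : X) : 0 < w k x := Real.exp_pos _
  have := isFiniteMeasure_fiberwiseWithDensity μ₁ hw
  have : NeZero (fiberwiseWithDensity μ₁ w) :=
    ⟨fiberwiseWithDensity_ne_zero hμ₁ (fun k => (hw k).measurable) hw_pos⟩
  subst hν
  refine ⟨isProbabilityMeasureSMul, fun f hf => ?_⟩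
  rw [integral_smul_measure, integral_smul_measure,
    integral_fiberwiseWithDensity μ₁ hw (fun k x => (hw_pos k x).le) (by fun_prop),
    integral_fiberwiseWithDensity μ₁ hw (fun k x => (hw_pos k x).le) (by fun_prop)]
  congr 2 with x
  exact sum_exp_smul_sum_eq_of_cocycle (c := fun h k => c (h, x, k))
    (fun h m k => hcocycle h m k x) β 0 (fun k j => f (k, x, j))

/-- Let `X` be compact Hausdorff, `N = Fin n`, `G = N × X × N` the groupoid of the trivial
equivalence on `N` fibred over `X`, `c : G → ℝ` a continuous 1-cocycle and `β ∈ ℝ`.  Given a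
nonzero finite measure `μ₁` on `X`, define `μ_k` on `X_k = {k} × X` by
`dμ_k x = exp (-β c (k,x,0)) dμ₁ x`, `μ = ∑_k μ_k` and `ν = μ / μ(G⁽⁰⁾)`.  Then `ν` is a
quasi-invariant probability measure on `G⁽⁰⁾ = N × X` with Radon–Nikodym derivative
`e^{-βc}`:  `∫ ∑_{γ ∈ G^u} f γ dν u = ∫ ∑_{γ ∈ G_u} f γ · e^{-β c γ} dν u` for `f ∈ C(G)`. -/
theorem stmt_15 {X : Type*} [TopologicalSpace X] [CompactSpace X] [T2Space X]
    [MeasurableSpace X] [BorelSpace X] {n : ℕ} [NeZero n]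
    (c : Fin n × X × Fin n → ℝ) (hc : Continuous c)
    (hcocycle : ∀ (h m k : Fin n) (x : X), c (h, x, m) + c (m, x, k) = c (h, x, k))
    (β : ℝ)
    (μ₁ : Measure X) [IsFiniteMeasure μ₁] (hμ₁ : μ₁ ≠ 0) :
    ∀ μk : Fin n → Measure X,
      (μk = fun k => μ₁.withDensity fun x => ENNReal.ofReal (Real.exp (-β * c (k, x, 0)))) →
    ∀ μ : Measure (Fin n × X),
      (μ = Measure.sum fun k => (μk k).map fun x => (k, x)) →
    ∀ ν : Measure (Fin n × X), (ν = (μ Set.univ)⁻¹ • μ) →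
    IsProbabilityMeasure ν ∧
    ∀ f : Fin n × X × Fin n → ℂ, Continuous f →
      ∫ u, (∑ j : Fin n, f (u.1, u.2, j)) ∂ν
        = ∫ u, (∑ i : Fin n, f (i, u.2, u.1) * (Real.exp (-β * c (i, u.2, u.1)) : ℝ)) ∂ν :=
  stmt_15_general c hc hcocycle β μ₁ hμ₁
end

section
/- Let G_x^x be a discrete group and A(x) = (A_γ)_{γ ∈ G_x^x} a Fell bundle over G_x^x. If φ is a state on C*(G_x^x; A(x)) satisfying the condition φ(a ξ* ξ · δ_γ) = φ(ξ a ξ* · δ_{η γ η⁻¹}) for all γ, η ∈ G_x^x, a ∈ A_γ, ξ ∈ A_η, then φ is a tracial state on C*(G_x^x; A(x)): φ(uv) = φ(vu) for all u, v. -/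
open Filter Topology

section FellTraceAux

variable {B : Type*} [NonUnitalCStarAlgebra B]

/-- `pwA t n = t^(n+1)` (powers in a non-unital algebra). -/
private def pwA (t : B) : ℕ → B
  | 0 => t
  | n + 1 => pwA t n * t

private lemma pwA_zero (t : B) : pwA t 0 = t := rfl

private lemma pwA_succ (t : B) (n : ℕ) : pwA t (n + 1) = pwA t n * t := rfl

private lemma pwA_comm (t : B) (n : ℕ) : t * pwA t n = pwA t n * t := by
  induction n with
  | zero => rfl
  | succ n ih => rw [pwA_succ, ← mul_assoc, ih]

private lemma smulR_mem (V : Submodule ℂ B) (r : ℝ) {y : B} (hy : y ∈ V) : r • y ∈ V := by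
  rw [← Complex.coe_smul]
  exact V.smul_mem _ hy

private lemma span_pwA_mul_mem (t : B) {y : B}
    (hy : y ∈ Submodule.span ℂ (Set.range (pwA t))) :
    t * y ∈ Submodule.span ℂ (Set.range (pwA t)) := by
  induction hy using Submodule.span_induction with
  | mem x hx =>
    obtain ⟨n, rfl⟩ := hx
    rw [pwA_comm t n, ← pwA_succ]
    exact Submodule.subset_span ⟨n + 1, rfl⟩
  | zero => rw [mul_zero]; exact zero_mem _
  | add x y _ _ hx hy => rw [mul_add]; exact add_mem hx hy
  | smul c x _ hx => rw [mul_smul_comm]; exact Submodule.smul_mem _ c hx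

private lemma cfc_mem_span (t : B) (htSA : IsSelfAdjoint t) (M : ℝ) (hM : 0 < M) :
    ∀ n : ℕ, cfcₙ (fun σ : ℝ => 1 - (1 - σ / M) ^ n) t ∈
      Submodule.span ℂ (Set.range (pwA t)) := by
  have hMne : M ≠ 0 := ne_of_gt hM
  intro n
  induction n with
  | zero =>
    have h0 : (fun σ : ℝ => 1 - (1 - σ / M) ^ 0) = fun _ : ℝ => (0 : ℝ) := by
      funext σ; simp
    rw [h0, cfcₙ_const_zero]
    exact zero_mem _
  | succ n ih =>
    have h1 : (fun σ : ℝ => 1 - (1 - σ / M) ^ (n + 1)) =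
        fun σ : ℝ => (1 - (1 - σ / M) ^ n) +
          (M⁻¹ * σ - M⁻¹ * (σ * (1 - (1 - σ / M) ^ n))) := by
      funext σ; rw [div_eq_inv_mul]; ring
    have h2 := cfcₙ_add (R := ℝ) (a := t) (f := fun σ : ℝ => 1 - (1 - σ / M) ^ n)
      (g := fun σ : ℝ => M⁻¹ * σ - M⁻¹ * (σ * (1 - (1 - σ / M) ^ n)))
      (by fun_prop) (by simp) (by fun_prop) (by simp)
    have h3 := cfcₙ_sub (R := ℝ) (a := t) (f := fun σ : ℝ => M⁻¹ * σ)
      (g := fun σ : ℝ => M⁻¹ * (σ * (1 - (1 - σ / M) ^ n)))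
      (by fun_prop) (by simp) (by fun_prop) (by simp)
    have h4 := cfcₙ_const_mul (R := ℝ) (a := t) M⁻¹ (fun σ : ℝ => σ) (by fun_prop) (by simp)
    have h5 := cfcₙ_const_mul (R := ℝ) (a := t) M⁻¹
      (fun σ : ℝ => σ * (1 - (1 - σ / M) ^ n)) (by fun_prop) (by simp)
    have h6 := cfcₙ_mul (R := ℝ) (a := t) (f := fun σ : ℝ => σ)
      (g := fun σ : ℝ => 1 - (1 - σ / M) ^ n)
      (by fun_prop) (by simp) (by fun_prop) (by simp)
    rw [h1, h2, h3, h4, h5, h6, cfcₙ_id' ℝ t]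
    exact add_mem ih (sub_mem (smulR_mem _ _ (Submodule.subset_span ⟨0, rfl⟩))
      (smulR_mem _ _ (span_pwA_mul_mem t ih)))

private lemma quasispectrum_bounds (ξ : B) :
    ∀ x ∈ quasispectrum ℝ (star ξ * ξ), 0 ≤ x ∧ x ≤ ‖star ξ * ξ‖ := by
  intro x hx
  rw [Unitization.quasispectrum_eq_spectrum_inr' ℝ ℂ] at hx
  have hcast : ((star ξ * ξ : B) : Unitization ℂ B) =
      star (ξ : Unitization ℂ B) * (ξ : Unitization ℂ B) := by
    rw [Unitization.inr_mul, Unitization.inr_star]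
  constructor
  · rw [hcast] at hx
    exact spectrum_star_mul_self_nonneg x hx
  · have h1 : ‖x‖ ≤ ‖((star ξ * ξ : B) : Unitization ℂ B)‖ :=
      spectrum.norm_le_norm_of_mem hx
    rw [Unitization.norm_inr] at h1
    exact (le_abs_self x).trans h1

private lemma exp_bound_aux : ∀ w : ℝ, 0 ≤ w → w * Real.exp (-w) ≤ 1 := by
  intro w hw
  have h := Real.add_one_le_exp w
  rw [Real.exp_neg, ← div_eq_mul_inv, div_le_one (Real.exp_pos w)]
  linarith

private lemma poly_bound_aux {M : ℝ} (hM : 0 < M) (n : ℕ) (σ : ℝ) (h0 : 0 ≤ σ)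
    (h1 : σ ≤ M - 1) : σ * (1 - (1 - (1 - σ / M) ^ (n + 1))) ^ 2 ≤ M / (2 * (n + 1)) := by
  have hMne : M ≠ 0 := ne_of_gt hM
  have hu0 : 0 ≤ σ / M := div_nonneg h0 hM.le
  have hu1 : 0 ≤ 1 - σ / M := by
    rw [sub_nonneg, div_le_one hM]; linarith
  have hσM : σ = M * (σ / M) := by field_simp
  set c : ℝ := 2 * (n + 1) with hc
  have hcpos : (0 : ℝ) < c := by positivity
  have hexp1 : 1 - σ / M ≤ Real.exp (-(σ / M)) := by
    have := Real.add_one_le_exp (-(σ / M)); linarith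
  have h3 : ((1 - σ / M) ^ (n + 1)) ^ 2 ≤ Real.exp (-(c * (σ / M))) := by
    rw [← pow_mul]
    calc (1 - σ / M) ^ ((n + 1) * 2) ≤ Real.exp (-(σ / M)) ^ ((n + 1) * 2) :=
          pow_le_pow_left₀ hu1 hexp1 _
      _ = Real.exp (-(c * (σ / M))) := by
          rw [← Real.exp_nat_mul]
          congr 1
          push_cast [hc]
          ring
  have h5 : σ * Real.exp (-(c * (σ / M))) ≤ M / c := by
    have key := exp_bound_aux (c * (σ / M)) (by positivity)
    calc σ * Real.exp (-(c * (σ / M)))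
        = (M / c) * ((c * (σ / M)) * Real.exp (-(c * (σ / M)))) := by
          field_simp
      _ ≤ (M / c) * 1 := by
          apply mul_le_mul_of_nonneg_left key
          positivity
      _ = M / c := mul_one _
  have h6 : (1 - (1 - (1 - σ / M) ^ (n + 1))) ^ 2 = ((1 - σ / M) ^ (n + 1)) ^ 2 := by ring
  rw [h6]
  calc σ * ((1 - σ / M) ^ (n + 1)) ^ 2 ≤ σ * Real.exp (-(c * (σ / M))) :=
        mul_le_mul_of_nonneg_left h3 h0
    _ ≤ M / c := h5

private lemma cfc_norm_bound (ξ : B) (n : ℕ) :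
    ‖ξ - ξ * cfcₙ (fun σ : ℝ => 1 - (1 - σ / (‖star ξ * ξ‖ + 1)) ^ (n + 1)) (star ξ * ξ)‖ ^ 2
      ≤ (‖star ξ * ξ‖ + 1) / (2 * (n + 1)) := by
  have htSA : IsSelfAdjoint (star ξ * ξ) := IsSelfAdjoint.star_mul_self ξ
  have hM : (0 : ℝ) < ‖star ξ * ξ‖ + 1 := by positivity
  set q : ℝ → ℝ := fun σ : ℝ => 1 - (1 - σ / (‖star ξ * ξ‖ + 1)) ^ (n + 1) with hqdef
  have hqc : Continuous q := by rw [hqdef]; fun_prop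
  have hq0 : q 0 = 0 := by rw [hqdef]; simp
  set e : B := cfcₙ q (star ξ * ξ) with hedef
  have heSA : IsSelfAdjoint e := cfcₙ_predicate q (star ξ * ξ)
  have hsd : star (ξ - ξ * e) * (ξ - ξ * e) =
      (star ξ * ξ - star ξ * ξ * e) - (e * (star ξ * ξ) - e * (star ξ * ξ * e)) := by
    rw [star_sub, star_mul, heSA.star_eq]
    noncomm_ring
  have h2 := cfcₙ_sub (R := ℝ) (a := star ξ * ξ) (f := fun σ : ℝ => σ - σ * q σ)
    (g := fun σ : ℝ => q σ * σ - q σ * (σ * q σ))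
    (by fun_prop) (by simp [hq0]) (by fun_prop) (by simp [hq0])
  have h3 := cfcₙ_sub (R := ℝ) (a := star ξ * ξ) (f := fun σ : ℝ => σ)
    (g := fun σ : ℝ => σ * q σ) (by fun_prop) (by simp) (by fun_prop) (by simp [hq0])
  have h4 := cfcₙ_sub (R := ℝ) (a := star ξ * ξ) (f := fun σ : ℝ => q σ * σ)
    (g := fun σ : ℝ => q σ * (σ * q σ))
    (by fun_prop) (by simp [hq0]) (by fun_prop) (by simp [hq0])
  have h5 := cfcₙ_mul (R := ℝ) (a := star ξ * ξ) (f := fun σ : ℝ => σ) (g := q)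
    (by fun_prop) (by simp) (by fun_prop) (by simp [hq0])
  have h6 := cfcₙ_mul (R := ℝ) (a := star ξ * ξ) (f := q) (g := fun σ : ℝ => σ)
    (by fun_prop) (by simp [hq0]) (by fun_prop) (by simp)
  have h7 := cfcₙ_mul (R := ℝ) (a := star ξ * ξ) (f := q) (g := fun σ : ℝ => σ * q σ)
    (by fun_prop) (by simp [hq0]) (by fun_prop) (by simp)
  have hGt : cfcₙ (fun σ : ℝ => (σ - σ * q σ) - (q σ * σ - q σ * (σ * q σ))) (star ξ * ξ) =
      (star ξ * ξ - star ξ * ξ * e) - (e * (star ξ * ξ) - e * (star ξ * ξ * e)) := by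
    rw [h2, h3, h4, h5, h6, h7, h5, cfcₙ_id' ℝ (star ξ * ξ)]
  have hnorm : ‖ξ - ξ * e‖ ^ 2 =
      ‖cfcₙ (fun σ : ℝ => (σ - σ * q σ) - (q σ * σ - q σ * (σ * q σ))) (star ξ * ξ)‖ := by
    rw [hGt, ← hsd, CStarRing.norm_star_mul_self, sq]
  rw [hnorm]
  apply norm_cfcₙ_le
  intro σ hσ
  obtain ⟨hσ0, hσ1⟩ := quasispectrum_bounds ξ σ hσ
  have hGσ : (σ - σ * q σ) - (q σ * σ - q σ * (σ * q σ)) = σ * (1 - q σ) ^ 2 := by ring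
  rw [hGσ, Real.norm_eq_abs, abs_of_nonneg (by positivity)]
  have := poly_bound_aux hM n σ hσ0 (by linarith)
  rw [hqdef]
  exact this

private lemma cfc_approx (ξ : B) {ε : ℝ} (hε : 0 < ε) :
    ∃ y ∈ Submodule.span ℂ (Set.range (pwA (star ξ * ξ))), ‖ξ - ξ * y‖ < ε := by
  have htSA : IsSelfAdjoint (star ξ * ξ) := IsSelfAdjoint.star_mul_self ξ
  have hM : (0 : ℝ) < ‖star ξ * ξ‖ + 1 := by positivity
  obtain ⟨n, hn⟩ := exists_nat_gt ((‖star ξ * ξ‖ + 1) / (2 * ε ^ 2))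
  have hn2 : (‖star ξ * ξ‖ + 1) / (2 * (n + 1)) < ε ^ 2 := by
    rw [div_lt_iff₀ (by positivity)]
    rw [div_lt_iff₀ (by positivity)] at hn
    nlinarith [sq_nonneg ε, hε]
  refine ⟨cfcₙ (fun σ : ℝ => 1 - (1 - σ / (‖star ξ * ξ‖ + 1)) ^ (n + 1)) (star ξ * ξ),
    cfc_mem_span _ htSA _ hM (n + 1), ?_⟩
  have hb := cfc_norm_bound ξ n
  nlinarith [norm_nonneg
    (ξ - ξ * cfcₙ (fun σ : ℝ => 1 - (1 - σ / (‖star ξ * ξ‖ + 1)) ^ (n + 1)) (star ξ * ξ)), hε]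

end FellTraceAux


/-- Let `A(x)` be a saturated Fell bundle over a discrete group `Γ = G_x^x`, presented by
the canonical grading of its full C*-algebra `B = C*(G_x^x; A(x))` by closed subspaces
`A γ` with dense total span (`a ∈ A γ` corresponds to `a δ_γ`).  If a state `φ` on `B`
satisfies `φ (a ξ* ξ δ_γ) = φ (ξ a ξ* δ_{ηγη⁻¹})` for all `γ, η ∈ Γ`, `a ∈ A γ`, `ξ ∈ A η`,
then `φ` is tracial: `φ (u v) = φ (v u)` for all `u, v ∈ B`. -/
theorem stmt_19 {Γ : Type*} [Group Γ]
    {B : Type*} [NonUnitalCStarAlgebra B]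
    (A : Γ → Submodule ℂ B)
    (hclosed : ∀ γ, IsClosed (A γ : Set B))
    (hmul : ∀ γ η : Γ, ∀ a ∈ A γ, ∀ b ∈ A η, a * b ∈ A (γ * η))
    (hstar : ∀ γ : Γ, ∀ a ∈ A γ, star a ∈ A γ⁻¹)
    (hdense : Dense (Submodule.span ℂ (⋃ γ : Γ, (A γ : Set B)) : Set B))
    -- a state on `B`
    (φ : B →L[ℂ] ℂ) (hφ_norm : ‖φ‖ = 1)
    (hφ_pos : ∀ b : B, 0 ≤ (φ (star b * b)).re ∧ (φ (star b * b)).im = 0)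
    -- the trace-type condition on spanning elements
    (hcond : ∀ γ η : Γ, ∀ a ∈ A γ, ∀ ξ ∈ A η,
      φ (a * (star ξ * ξ)) = φ (ξ * a * star ξ)) :
    ∀ u v : B, φ (u * v) = φ (v * u) := by
  classical
  -- extension of the condition to all `a : B`
  have hext : ∀ (η : Γ), ∀ ξ ∈ A η, ∀ a : B,
      φ (a * (star ξ * ξ)) = φ (ξ * a * star ξ) := by
    intro η ξ hξ
    have hEq : (fun a : B => φ (a * (star ξ * ξ))) = fun a : B => φ (ξ * a * star ξ) := by
      refine Continuous.ext_on hdense ?_ ?_ ?_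
      · exact φ.continuous.comp (continuous_id.mul continuous_const)
      · exact φ.continuous.comp ((continuous_const.mul continuous_id).mul continuous_const)
      · intro a ha
        induction ha using Submodule.span_induction with
        | mem x hx =>
          obtain ⟨s, ⟨γ, rfl⟩, hx⟩ := hx
          exact hcond γ η x hx ξ hξ
        | zero => simp
        | add x y _ _ hx hy =>
          simp only [add_mul, mul_add, map_add, hx, hy]
        | smul c x _ hx =>
          simp only [smul_mul_assoc, mul_smul_comm, map_smul, hx]
    exact fun a => congrFun hEq a
  -- φ is real on selfadjoint elements
  have hrealSA : ∀ h : B, IsSelfAdjoint h → (starRingEnd ℂ) (φ h) = φ h := by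
    intro h hh
    have hSAf : ∀ f : ℝ → ℝ, IsSelfAdjoint (cfcₙ f h) := fun f => cfcₙ_predicate f h
    have hp : star (cfcₙ (fun σ : ℝ => Real.sqrt (max σ 0)) h) *
        cfcₙ (fun σ : ℝ => Real.sqrt (max σ 0)) h = cfcₙ (fun σ : ℝ => max σ 0) h := by
      rw [(hSAf _).star_eq,
        ← cfcₙ_mul (fun σ : ℝ => Real.sqrt (max σ 0)) (fun σ : ℝ => Real.sqrt (max σ 0)) h]
      exact cfcₙ_congr fun σ _ => Real.mul_self_sqrt (le_max_right _ _)
    have hn : star (cfcₙ (fun σ : ℝ => Real.sqrt (max (-σ) 0)) h) *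
        cfcₙ (fun σ : ℝ => Real.sqrt (max (-σ) 0)) h = cfcₙ (fun σ : ℝ => max (-σ) 0) h := by
      rw [(hSAf _).star_eq,
        ← cfcₙ_mul (fun σ : ℝ => Real.sqrt (max (-σ) 0)) (fun σ : ℝ => Real.sqrt (max (-σ) 0)) h]
      exact cfcₙ_congr fun σ _ => Real.mul_self_sqrt (le_max_right _ _)
    have hdecomp : h = star (cfcₙ (fun σ : ℝ => Real.sqrt (max σ 0)) h) *
        cfcₙ (fun σ : ℝ => Real.sqrt (max σ 0)) h -
        star (cfcₙ (fun σ : ℝ => Real.sqrt (max (-σ) 0)) h) *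
        cfcₙ (fun σ : ℝ => Real.sqrt (max (-σ) 0)) h := by
      rw [hp, hn, ← cfcₙ_sub (fun σ : ℝ => max σ 0) (fun σ : ℝ => max (-σ) 0) h]
      have heq : (fun σ : ℝ => max σ 0 - max (-σ) 0) = fun σ : ℝ => σ := by
        funext σ
        rcases le_total σ 0 with h | h
        · rw [max_eq_right h, max_eq_left (by linarith)]; ring
        · rw [max_eq_left h, max_eq_right (by linarith)]; ring
      rw [heq, cfcₙ_id' ℝ h]
    have hre : ∀ b : B, (starRingEnd ℂ) (φ (star b * b)) = φ (star b * b) := by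
      intro b
      exact Complex.conj_eq_iff_im.mpr (hφ_pos b).2
    rw [hdecomp, map_sub, map_sub, hre, hre]
  -- φ is selfadjoint
  have hsa : ∀ x : B, φ (star x) = starRingEnd ℂ (φ x) := by
    intro x
    have e1 := hrealSA (x + star x) (by
      rw [IsSelfAdjoint]; simp [star_add, add_comm])
    have e2 := hrealSA (Complex.I • x + star (Complex.I • x)) (by
      rw [IsSelfAdjoint]; simp [star_add, add_comm])
    have d1 : star (Complex.I • x) = -(Complex.I • star x) := by
      rw [star_smul]; simp [Complex.conj_I]
    rw [d1] at e2
    simp only [map_add, map_sub, map_neg, map_smul, smul_eq_mul, map_mul, Complex.conj_I] at e1 e2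
    linear_combination (-(1:ℂ)/2) * e1 + (-Complex.I/2) * e2 +
      ((φ (star x) - φ x - (starRingEnd ℂ) (φ x) + (starRingEnd ℂ) (φ (star x)))/2) *
        Complex.I_sq
  -- main step: φ commutes with homogeneous elements
  have hA : ∀ (η : Γ), ∀ ξ ∈ A η, ∀ b : B, φ (b * ξ) = φ (ξ * b) := by
    intro η ξ hξ
    have hL1 : ∀ a : B, φ (a * (star ξ * ξ)) = φ (ξ * a * star ξ) := hext η ξ hξ
    have hL1' : ∀ a : B, φ (a * (ξ * star ξ)) = φ (star ξ * a * ξ) := by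
      intro a
      simpa [star_star] using hext η⁻¹ (star ξ) (hstar η ξ hξ) a
    have hss : star (ξ * star ξ) = ξ * star ξ := by rw [star_mul, star_star]
    have hxt : ξ * (star ξ * ξ) = (ξ * star ξ) * ξ := (mul_assoc ξ (star ξ) ξ).symm
    have hL3 : ∀ n, ξ * pwA (star ξ * ξ) n = pwA (ξ * star ξ) n * ξ := by
      intro n
      induction n with
      | zero => rw [pwA_zero, pwA_zero, hxt]
      | succ n ih =>
        rw [pwA_succ, pwA_succ]
        calc ξ * (pwA (star ξ * ξ) n * (star ξ * ξ))
            = (ξ * pwA (star ξ * ξ) n) * (star ξ * ξ) := (mul_assoc _ _ _).symm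
          _ = (pwA (ξ * star ξ) n * ξ) * (star ξ * ξ) := by rw [ih]
          _ = pwA (ξ * star ξ) n * (ξ * (star ξ * ξ)) := mul_assoc _ _ _
          _ = pwA (ξ * star ξ) n * ((ξ * star ξ) * ξ) := by rw [hxt]
          _ = (pwA (ξ * star ξ) n * (ξ * star ξ)) * ξ := (mul_assoc _ _ _).symm
    have hL4 : ∀ n, ∀ b : B,
        φ (b * (ξ * pwA (star ξ * ξ) n)) = φ ((ξ * b) * pwA (ξ * star ξ) n) := by
      intro n b
      cases n with
      | zero =>
        rw [pwA_zero, pwA_zero]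
        calc φ (b * (ξ * (star ξ * ξ))) = φ ((b * ξ) * (star ξ * ξ)) := by
              rw [mul_assoc]
          _ = φ (ξ * (b * ξ) * star ξ) := hL1 (b * ξ)
          _ = φ ((ξ * b) * (ξ * star ξ)) := congrArg φ (by simp only [mul_assoc])
      | succ n =>
        rw [pwA_succ, pwA_succ]
        calc φ (b * (ξ * (pwA (star ξ * ξ) n * (star ξ * ξ))))
            = φ ((b * (ξ * pwA (star ξ * ξ) n)) * (star ξ * ξ)) :=
              congrArg φ (by simp only [mul_assoc])
          _ = φ (ξ * (b * (ξ * pwA (star ξ * ξ) n)) * star ξ) := hL1 _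
          _ = φ ((ξ * b) * (pwA (ξ * star ξ) n * (ξ * star ξ))) := by
              rw [hL3 n]
              exact congrArg φ (by simp only [mul_assoc])
    have hL5 : ∀ c : B, φ ((ξ * star ξ) * c) = φ (c * (ξ * star ξ)) := by
      intro c
      have h1 : (ξ * star ξ) * c = star (star c * (ξ * star ξ)) := by
        rw [star_mul, star_star, hss]
      calc φ ((ξ * star ξ) * c) = φ (star (star c * (ξ * star ξ))) := by rw [← h1]
        _ = starRingEnd ℂ (φ (star c * (ξ * star ξ))) := hsa _
        _ = starRingEnd ℂ (φ (star ξ * star c * ξ)) := by rw [hL1' (star c)]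
        _ = φ (star (star ξ * star c * ξ)) := (hsa _).symm
        _ = φ (star ξ * c * ξ) := by
            rw [show star (star ξ * star c * ξ) = star ξ * c * ξ by
              simp only [star_mul, star_star, mul_assoc]]
        _ = φ (c * (ξ * star ξ)) := (hL1' c).symm
    have hL6 : ∀ n, ∀ c : B,
        φ (pwA (ξ * star ξ) n * c) = φ (c * pwA (ξ * star ξ) n) := by
      intro n
      induction n with
      | zero => intro c; rw [pwA_zero]; exact hL5 c
      | succ n ih =>
        intro c
        rw [pwA_succ]
        calc φ ((pwA (ξ * star ξ) n * (ξ * star ξ)) * c)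
            = φ (pwA (ξ * star ξ) n * ((ξ * star ξ) * c)) := by rw [mul_assoc]
          _ = φ (((ξ * star ξ) * c) * pwA (ξ * star ξ) n) := ih _
          _ = φ ((ξ * star ξ) * (c * pwA (ξ * star ξ) n)) := by rw [mul_assoc]
          _ = φ ((c * pwA (ξ * star ξ) n) * (ξ * star ξ)) := hL5 _
          _ = φ (c * (pwA (ξ * star ξ) n * (ξ * star ξ))) := by rw [mul_assoc]
    have hK : ∀ n, ∀ b : B,
        φ (b * (ξ * pwA (star ξ * ξ) n)) = φ ((ξ * pwA (star ξ * ξ) n) * b) := by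
      intro n b
      calc φ (b * (ξ * pwA (star ξ * ξ) n)) = φ ((ξ * b) * pwA (ξ * star ξ) n) := hL4 n b
        _ = φ (pwA (ξ * star ξ) n * (ξ * b)) := (hL6 n _).symm
        _ = φ ((pwA (ξ * star ξ) n * ξ) * b) := by rw [mul_assoc]
        _ = φ ((ξ * pwA (star ξ * ξ) n) * b) := by rw [← hL3 n]
    -- pass to the closure
    have hKV : ∀ y ∈ Submodule.span ℂ (Set.range (pwA (star ξ * ξ))), ∀ b : B,
        φ (b * (ξ * y)) = φ ((ξ * y) * b) := by
      intro y hy b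
      induction hy using Submodule.span_induction with
      | mem x hx => obtain ⟨n, rfl⟩ := hx; exact hK n b
      | zero => simp
      | add x y _ _ hx hy =>
        simp only [mul_add, add_mul, map_add, hx, hy]
      | smul c x _ hx =>
        simp only [mul_smul_comm, smul_mul_assoc, map_smul, hx]
    have hWclosed : IsClosed {x : B | ∀ b : B, φ (b * x) = φ (x * b)} := by
      have : {x : B | ∀ b : B, φ (b * x) = φ (x * b)} =
          ⋂ b : B, {x : B | φ (b * x) = φ (x * b)} := by
        ext x; simp
      rw [this]
      refine isClosed_iInter fun b => isClosed_eq ?_ ?_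
      · exact φ.continuous.comp (continuous_const.mul continuous_id)
      · exact φ.continuous.comp (continuous_id.mul continuous_const)
    have hmem : ξ ∈ closure ((fun y => ξ * y) '' (Submodule.span ℂ (Set.range (pwA (star ξ * ξ))))) := by
      rw [Metric.mem_closure_iff]
      intro ε hε
      obtain ⟨y, hy, hlt⟩ := cfc_approx ξ hε
      exact ⟨ξ * y, ⟨y, hy, rfl⟩, by rwa [dist_eq_norm]⟩
    have hsub : ((fun y => ξ * y) '' (Submodule.span ℂ (Set.range (pwA (star ξ * ξ))))) ⊆
        {x : B | ∀ b : B, φ (b * x) = φ (x * b)} := by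
      rintro - ⟨y, hy, rfl⟩
      exact fun b => hKV y hy b
    have := closure_minimal hsub hWclosed hmem
    exact fun b => this b
  -- conclusion
  intro u v
  have hEq : (fun v : B => φ (u * v)) = fun v : B => φ (v * u) := by
    refine Continuous.ext_on hdense ?_ ?_ ?_
    · exact φ.continuous.comp (continuous_const.mul continuous_id)
    · exact φ.continuous.comp (continuous_id.mul continuous_const)
    · intro x hx
      induction hx using Submodule.span_induction with
      | mem x hx =>
        obtain ⟨s, ⟨γ, rfl⟩, hx⟩ := hx
        exact hA γ x hx u
      | zero => simp
      | add x y _ _ hx hy => simp only [add_mul, mul_add, map_add, hx, hy]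
      | smul c x _ hx => simp only [smul_mul_assoc, mul_smul_comm, map_smul, hx]
  exact congrFun hEq v
end
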